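/- Let F_q be a finite field, H_A ∈ F_q^{m_A×n_A}, H_B ∈ F_q^{m_B×n_B} matrices with rank(H_A) < min(m_A, n_A) and rank(H_B) < min(m_B, n_B) (so that neither H_A, H_B nor their transposes are full rank), and let H_X = [I_{m_A} ⊗ H_B | H_A ⊗ I_{m_B}], H_Z = [H_Aᵀ ⊗ I_{n_B} | −I_{n_A} ⊗ H_Bᵀ]. Set d_A = min{wt(v) : v ∈ ker H_A, v ≠ 0}, d_Aᵀ = min{wt(v) : v ∈ ker H_Aᵀ, v ≠ 0}, and similarly d_B, d_Bᵀ. Then ker H_X \ rowspace(H_Z) and ker H_Z \ rowspace(H_X) are nonempty, min{wt(v) : v ∈ ker H_X \ rowspace(H_Z)} ≤ min{d_A, d_B}, and min{wt(v) : v ∈ ker H_Z \ rowspace(H_X)} ≤ min{d_Aᵀ, d_Bᵀ}. Consequently the distance of the qudit hypergraph product code satisfies d ≤ min{d_A, d_Aᵀ, d_B, d_Bᵀ}. -/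

import Mathlib

/-!
The rank conditions make `ker H_A`, `ker H_B`, `ker H_Aᵀ`, `ker H_Bᵀ` nonzero. Take nonzero
`x ∈ ker H_A` and `y ∈ ker H_Bᵀ` of minimum weight, with `x k ≠ 0` and `y l ≠ 0`. Then
`u = (0, x ⊗ e_l) ∈ ker H_X` and `w = (0, e_k ⊗ y) ∈ ker H_Z`, with `u ⬝ w = x k * y l ≠ 0`.
As `w` is orthogonal to every row of `H_Z` but not to `u`, `u ∉ rowspace H_Z`; symmetrically
`w ∉ rowspace H_X`. Since `wt u = d_A` and `wt w = d_Bᵀ`, this gives two of the four bounds;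
the pair `(e_a ⊗ z, 0)`, `(y' ⊗ e_b, 0)` built from `z ∈ ker H_B`, `y' ∈ ker H_Aᵀ` gives the
other two.
-/

open Matrix Kronecker Finset

def kronVec {R α β : Type*} [Mul R] (f : α → R) (g : β → R) : α × β → R :=
  fun p => f p.1 * g p.2

section KronVec

variable {R α β : Type*}

@[simp]
lemma kronVec_apply [Mul R] (f : α → R) (g : β → R) (p : α × β) :
    kronVec f g p = f p.1 * g p.2 :=
  rfl

@[simp]
lemma kronVec_zero_left [MulZeroClass R] (g : β → R) : kronVec (0 : α → R) g = 0 := by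
  ext; simp

@[simp]
lemma kronVec_zero_right [MulZeroClass R] (f : α → R) : kronVec f (0 : β → R) = 0 := by
  ext; simp

lemma kronecker_mulVec_kronVec [CommSemiring R] [Fintype α] [Fintype β] {α' β' : Type*}
    (A : Matrix α' α R) (B : Matrix β' β R) (f : α → R) (g : β → R) :
    (A ⊗ₖ B) *ᵥ kronVec f g = kronVec (A *ᵥ f) (B *ᵥ g) := by
  ext ⟨i, j⟩
  simp only [mulVec, dotProduct, kronVec_apply, kroneckerMap_apply, sum_mul_sum,
    ← univ_product_univ, sum_product]
  exact sum_congr rfl fun _ _ => sum_congr rfl fun _ _ => mul_mul_mul_comm _ _ _ _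

lemma kronVec_dotProduct_kronVec [CommSemiring R] [Fintype α] [Fintype β]
    (f f' : α → R) (g g' : β → R) :
    kronVec f g ⬝ᵥ kronVec f' g' = (f ⬝ᵥ f') * (g ⬝ᵥ g') := by
  simp only [dotProduct, kronVec_apply, sum_mul_sum, ← univ_product_univ, sum_product]
  exact sum_congr rfl fun _ _ => sum_congr rfl fun _ _ => mul_mul_mul_comm _ _ _ _

lemma hammingNorm_kronVec [MulZeroClass R] [NoZeroDivisors R] [DecidableEq R]
    [Fintype α] [Fintype β] (f : α → R) (g : β → R) :
    hammingNorm (kronVec f g) = hammingNorm f * hammingNorm g := by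
  rw [hammingNorm, hammingNorm, hammingNorm, ← card_product]
  congr 1
  ext ⟨a, b⟩
  simp

end KronVec

lemma hammingNorm_sumElim {R α β : Type*} [Zero R] [DecidableEq R] [Fintype α] [Fintype β]
    (f : α → R) (g : β → R) :
    hammingNorm (Sum.elim f g) = hammingNorm f + hammingNorm g := by
  simp only [hammingNorm, card_filter, Fintype.sum_sum_type, Sum.elim_inl, Sum.elim_inr]
  rfl

lemma hammingNorm_single {R α : Type*} [Zero R] [DecidableEq R] [Fintype α] [DecidableEq α]
    (i : α) {a : R} (ha : a ≠ 0) :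
    hammingNorm (Pi.single i a : α → R) = 1 := by
  simp [hammingNorm, Pi.single_apply, ha, filter_eq']

lemma exists_mulVec_eq_zero_of_rank_lt {K m n : Type*} [Field K] [Fintype n]
    (M : Matrix m n K) (h : M.rank < Fintype.card n) :
    ∃ v ≠ 0, M *ᵥ v = 0 := by
  by_contra! hinj
  have : Function.Injective M.mulVecLin :=
    (injective_iff_map_eq_zero _).2 fun v hv => by_contra fun hv0 => hinj v hv0 hv
  rw [Matrix.rank, LinearMap.finrank_range_of_inj this, Module.finrank_fintype_fun_eq_card] at h
  exact h.false

lemma exists_hammingNorm_eq_sInf {K m n : Type*} [Field K] [DecidableEq K] [Fintype n]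
    (M : Matrix m n K) (h : M.rank < Fintype.card n) :
    ∃ v, M *ᵥ v = 0 ∧ v ≠ 0 ∧
      hammingNorm v = sInf {w : ℕ | ∃ v, M *ᵥ v = 0 ∧ v ≠ 0 ∧ hammingNorm v = w} := by
  obtain ⟨v, hv0, hv⟩ := exists_mulVec_eq_zero_of_rank_lt M h
  exact Nat.sInf_mem (s := {w : ℕ | ∃ v, M *ᵥ v = 0 ∧ v ≠ 0 ∧ hammingNorm v = w})
    ⟨_, v, hv, hv0, rfl⟩

lemma notMem_span_rows_of_dotProduct_ne_zero {K m n : Type*} [CommSemiring K] [Fintype m]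
    [Fintype n] {M : Matrix m n K} {u w : n → K} (hw : M *ᵥ w = 0) (huw : u ⬝ᵥ w ≠ 0) :
    u ∉ Submodule.span K (Set.range M) := by
  intro hu
  obtain ⟨c, rfl⟩ := (Submodule.mem_span_range_iff_exists_fun K).1 hu
  rw [← vecMul_eq_sum, ← dotProduct_mulVec, hw, dotProduct_zero] at huw
  exact huw rfl

section HypergraphProduct

variable {R mA nA mB nB : Type*} [CommRing R] (HA : Matrix mA nA R) (HB : Matrix mB nB R)

section X

variable [DecidableEq mA] [DecidableEq mB]

def hypergraphProductX : Matrix (mA × mB) ((mA × nB) ⊕ (nA × mB)) R :=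
  fromCols (1 ⊗ₖ HB) (HA ⊗ₖ 1)

variable [Fintype mA] [Fintype nA] [Fintype mB] [Fintype nB]

lemma hypergraphProductX_mulVec_inl (y : mA → R) (z : nB → R) :
    hypergraphProductX HA HB *ᵥ Sum.elim (kronVec y z) 0 = kronVec y (HB *ᵥ z) := by
  simp [hypergraphProductX, kronecker_mulVec_kronVec]

lemma hypergraphProductX_mulVec_inr (x : nA → R) (y : mB → R) :
    hypergraphProductX HA HB *ᵥ Sum.elim 0 (kronVec x y) = kronVec (HA *ᵥ x) y := by
  simp [hypergraphProductX, kronecker_mulVec_kronVec]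

end X

section Z

variable [DecidableEq nA] [DecidableEq nB]

def hypergraphProductZ : Matrix (nA × nB) ((mA × nB) ⊕ (nA × mB)) R :=
  fromCols (HAᵀ ⊗ₖ 1) (-(1 ⊗ₖ HBᵀ))

variable [Fintype mA] [Fintype nA] [Fintype mB] [Fintype nB]

lemma hypergraphProductZ_mulVec_inl (y : mA → R) (z : nB → R) :
    hypergraphProductZ HA HB *ᵥ Sum.elim (kronVec y z) 0 = kronVec (HAᵀ *ᵥ y) z := by
  simp [hypergraphProductZ, kronecker_mulVec_kronVec]

lemma hypergraphProductZ_mulVec_inr (x : nA → R) (y : mB → R) :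
    hypergraphProductZ HA HB *ᵥ Sum.elim 0 (kronVec x y) = -kronVec x (HBᵀ *ᵥ y) := by
  simp [hypergraphProductZ, kronecker_mulVec_kronVec, neg_mulVec]

end Z

variable [Fintype mA] [Fintype nA] [Fintype mB] [Fintype nB]
  [DecidableEq mA] [DecidableEq nA] [DecidableEq mB] [DecidableEq nB] [IsDomain R] [DecidableEq R]

lemma exists_logical_pair_of_mulVec_eq_zero_left {x : nA → R} {y : mB → R}
    (hx : HA *ᵥ x = 0) (hy : HBᵀ *ᵥ y = 0) (hx0 : x ≠ 0) (hy0 : y ≠ 0) :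
    ∃ u w, hypergraphProductX HA HB *ᵥ u = 0 ∧ hypergraphProductZ HA HB *ᵥ w = 0 ∧
      u ⬝ᵥ w ≠ 0 ∧ hammingNorm u = hammingNorm x ∧ hammingNorm w = hammingNorm y := by
  obtain ⟨k, hk⟩ := Function.ne_iff.1 hx0
  obtain ⟨l, hl⟩ := Function.ne_iff.1 hy0
  refine ⟨Sum.elim 0 (kronVec x (Pi.single l 1)), Sum.elim 0 (kronVec (Pi.single k 1) y),
    ?_, ?_, ?_, ?_, ?_⟩
  · simp [hypergraphProductX_mulVec_inr, hx]
  · simp [hypergraphProductZ_mulVec_inr, hy]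
  · simpa [sumElim_dotProduct_sumElim, kronVec_dotProduct_kronVec] using mul_ne_zero hk hl
  · simp [hammingNorm_sumElim, hammingNorm_kronVec, hammingNorm_single]
  · simp [hammingNorm_sumElim, hammingNorm_kronVec, hammingNorm_single]

lemma exists_logical_pair_of_mulVec_eq_zero_right {z : nB → R} {y : mA → R}
    (hz : HB *ᵥ z = 0) (hy : HAᵀ *ᵥ y = 0) (hz0 : z ≠ 0) (hy0 : y ≠ 0) :
    ∃ u w, hypergraphProductX HA HB *ᵥ u = 0 ∧ hypergraphProductZ HA HB *ᵥ w = 0 ∧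
      u ⬝ᵥ w ≠ 0 ∧ hammingNorm u = hammingNorm z ∧ hammingNorm w = hammingNorm y := by
  obtain ⟨b, hb⟩ := Function.ne_iff.1 hz0
  obtain ⟨a, ha⟩ := Function.ne_iff.1 hy0
  refine ⟨Sum.elim (kronVec (Pi.single a 1) z) 0, Sum.elim (kronVec y (Pi.single b 1)) 0,
    ?_, ?_, ?_, ?_, ?_⟩
  · simp [hypergraphProductX_mulVec_inl, hz]
  · simp [hypergraphProductZ_mulVec_inl, hy]
  · simpa [sumElim_dotProduct_sumElim, kronVec_dotProduct_kronVec] using mul_ne_zero ha hb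
  · simp [hammingNorm_sumElim, hammingNorm_kronVec, hammingNorm_single]
  · simp [hammingNorm_sumElim, hammingNorm_kronVec, hammingNorm_single]

end HypergraphProduct

theorem hgp_distance_upper_bound_general
    {F : Type*} [Field F] [DecidableEq F] (mA nA mB nB : ℕ)
    (HA : Matrix (Fin mA) (Fin nA) F) (HB : Matrix (Fin mB) (Fin nB) F)
    (hrA : HA.rank < min mA nA) (hrB : HB.rank < min mB nB)
    (HX : Matrix (Fin mA × Fin mB) ((Fin mA × Fin nB) ⊕ (Fin nA × Fin mB)) F)
    (HZ : Matrix (Fin nA × Fin nB) ((Fin mA × Fin nB) ⊕ (Fin nA × Fin mB)) F)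
    (hHX : HX = fromCols ((1 : Matrix (Fin mA) (Fin mA) F) ⊗ₖ HB)
        (HA ⊗ₖ (1 : Matrix (Fin mB) (Fin mB) F)))
    (hHZ : HZ = fromCols (HAᵀ ⊗ₖ (1 : Matrix (Fin nB) (Fin nB) F))
        (-((1 : Matrix (Fin nA) (Fin nA) F) ⊗ₖ HBᵀ)))
    (dA dB dAT dBT : ℕ)
    (hdA : dA = sInf {w : ℕ | ∃ v : Fin nA → F, HA.mulVec v = 0 ∧ v ≠ 0 ∧ hammingNorm v = w})
    (hdB : dB = sInf {w : ℕ | ∃ v : Fin nB → F, HB.mulVec v = 0 ∧ v ≠ 0 ∧ hammingNorm v = w})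
    (hdAT : dAT = sInf {w : ℕ | ∃ v : Fin mA → F, HAᵀ.mulVec v = 0 ∧ v ≠ 0 ∧ hammingNorm v = w})
    (hdBT : dBT = sInf {w : ℕ | ∃ v : Fin mB → F, HBᵀ.mulVec v = 0 ∧ v ≠ 0 ∧ hammingNorm v = w}) :
    (∃ v : ((Fin mA × Fin nB) ⊕ (Fin nA × Fin mB)) → F,
      HX.mulVec v = 0 ∧ v ∉ Submodule.span F (Set.range HZ)) ∧
    (∃ v : ((Fin mA × Fin nB) ⊕ (Fin nA × Fin mB)) → F,
      HZ.mulVec v = 0 ∧ v ∉ Submodule.span F (Set.range HX)) ∧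
    sInf {w : ℕ | ∃ v : ((Fin mA × Fin nB) ⊕ (Fin nA × Fin mB)) → F,
        HX.mulVec v = 0 ∧ v ∉ Submodule.span F (Set.range HZ) ∧ hammingNorm v = w}
      ≤ min dA dB ∧
    sInf {w : ℕ | ∃ v : ((Fin mA × Fin nB) ⊕ (Fin nA × Fin mB)) → F,
        HZ.mulVec v = 0 ∧ v ∉ Submodule.span F (Set.range HX) ∧ hammingNorm v = w}
      ≤ min dAT dBT := by
  subst hHX hHZ hdA hdB hdAT hdBT
  obtain ⟨x, hx, hx0, hxw⟩ := exists_hammingNorm_eq_sInf HA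
    (by simpa using hrA.trans_le (min_le_right ..))
  obtain ⟨z, hz, hz0, hzw⟩ := exists_hammingNorm_eq_sInf HB
    (by simpa using hrB.trans_le (min_le_right ..))
  obtain ⟨xT, hxT, hxT0, hxTw⟩ := exists_hammingNorm_eq_sInf HAᵀ
    (by simpa [rank_transpose] using hrA.trans_le (min_le_left ..))
  obtain ⟨zT, hzT, hzT0, hzTw⟩ := exists_hammingNorm_eq_sInf HBᵀ
    (by simpa [rank_transpose] using hrB.trans_le (min_le_left ..))
  obtain ⟨u₁, w₁, hu₁, hw₁, huw₁, hu₁x, hw₁zT⟩ :=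
    exists_logical_pair_of_mulVec_eq_zero_left HA HB hx hzT hx0 hzT0
  obtain ⟨u₂, w₂, hu₂, hw₂, huw₂, hu₂z, hw₂xT⟩ :=
    exists_logical_pair_of_mulVec_eq_zero_right HA HB hz hxT hz0 hxT0
  have hu₁Z := notMem_span_rows_of_dotProduct_ne_zero hw₁ huw₁
  have hu₂Z := notMem_span_rows_of_dotProduct_ne_zero hw₂ huw₂
  have hw₁X := notMem_span_rows_of_dotProduct_ne_zero hu₁ (dotProduct_comm u₁ w₁ ▸ huw₁)
  have hw₂X := notMem_span_rows_of_dotProduct_ne_zero hu₂ (dotProduct_comm u₂ w₂ ▸ huw₂)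
  refine ⟨⟨u₁, hu₁, hu₁Z⟩, ⟨w₁, hw₁, hw₁X⟩, le_min ?_ ?_, le_min ?_ ?_⟩
  · exact Nat.sInf_le ⟨u₁, hu₁, hu₁Z, hu₁x.trans hxw⟩
  · exact Nat.sInf_le ⟨u₂, hu₂, hu₂Z, hu₂z.trans hzw⟩
  · exact Nat.sInf_le ⟨w₂, hw₂, hw₂X, hw₂xT.trans hxTw⟩
  · exact Nat.sInf_le ⟨w₁, hw₁, hw₁X, hw₁zT.trans hzTw⟩

/-- upper bound on the distance of a qudit hypergraph product code.  If
`rank H_A < min(m_A, n_A)` and `rank H_B < min(m_B, n_B)`, then both logical sets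
`ker H_X \ rowspace H_Z` and `ker H_Z \ rowspace H_X` are nonempty, the minimum weight
of the first is `≤ min{d_A, d_B}`, and the minimum weight of the second is
`≤ min{d_Aᵀ, d_Bᵀ}`; consequently `d ≤ min{d_A, d_Aᵀ, d_B, d_Bᵀ}`. -/
theorem hgp_distance_upper_bound
    {F : Type*} [Field F] [Fintype F] [DecidableEq F] (mA nA mB nB : ℕ)
    (HA : Matrix (Fin mA) (Fin nA) F) (HB : Matrix (Fin mB) (Fin nB) F)
    (hrA : HA.rank < min mA nA) (hrB : HB.rank < min mB nB)
    (HX : Matrix (Fin mA × Fin mB) ((Fin mA × Fin nB) ⊕ (Fin nA × Fin mB)) F)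
    (HZ : Matrix (Fin nA × Fin nB) ((Fin mA × Fin nB) ⊕ (Fin nA × Fin mB)) F)
    (hHX : HX = fromCols ((1 : Matrix (Fin mA) (Fin mA) F) ⊗ₖ HB)
        (HA ⊗ₖ (1 : Matrix (Fin mB) (Fin mB) F)))
    (hHZ : HZ = fromCols (HAᵀ ⊗ₖ (1 : Matrix (Fin nB) (Fin nB) F))
        (-((1 : Matrix (Fin nA) (Fin nA) F) ⊗ₖ HBᵀ)))
    (dA dB dAT dBT : ℕ)
    (hdA : dA = sInf {w : ℕ | ∃ v : Fin nA → F, HA.mulVec v = 0 ∧ v ≠ 0 ∧ hammingNorm v = w})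
    (hdB : dB = sInf {w : ℕ | ∃ v : Fin nB → F, HB.mulVec v = 0 ∧ v ≠ 0 ∧ hammingNorm v = w})
    (hdAT : dAT = sInf {w : ℕ | ∃ v : Fin mA → F, HAᵀ.mulVec v = 0 ∧ v ≠ 0 ∧ hammingNorm v = w})
    (hdBT : dBT = sInf {w : ℕ | ∃ v : Fin mB → F, HBᵀ.mulVec v = 0 ∧ v ≠ 0 ∧ hammingNorm v = w}) :
    (∃ v : ((Fin mA × Fin nB) ⊕ (Fin nA × Fin mB)) → F,
      HX.mulVec v = 0 ∧ v ∉ Submodule.span F (Set.range HZ)) ∧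
    (∃ v : ((Fin mA × Fin nB) ⊕ (Fin nA × Fin mB)) → F,
      HZ.mulVec v = 0 ∧ v ∉ Submodule.span F (Set.range HX)) ∧
    sInf {w : ℕ | ∃ v : ((Fin mA × Fin nB) ⊕ (Fin nA × Fin mB)) → F,
        HX.mulVec v = 0 ∧ v ∉ Submodule.span F (Set.range HZ) ∧ hammingNorm v = w}
      ≤ min dA dB ∧
    sInf {w : ℕ | ∃ v : ((Fin mA × Fin nB) ⊕ (Fin nA × Fin mB)) → F,
        HZ.mulVec v = 0 ∧ v ∉ Submodule.span F (Set.range HX) ∧ hammingNorm v = w}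
      ≤ min dAT dBT :=
  hgp_distance_upper_bound_general mA nA mB nB HA HB hrA hrB HX HZ hHX hHZ dA dB dAT dBT hdA hdB
    hdAT hdBT
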